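/- Let n ≥ 4 and let H(q,p) = ½Σ_{i=1}^n p_i² + Σ_{i=1}^{n−1} e^{q_i − q_{i+1}} + e^{q_{n−1}+q_n} + e^{−q_1} + e^{−2q_1} on ℝ^{2n}. If (q(t), p(t)) solves Hamilton's equations q̇_i = ∂H/∂p_i, ṗ_i = −∂H/∂q_i, then the functions a_i = ½e^{(q_i − q_{i+1})/2} (i = 1, …, n−1), a_n = ½e^{(q_{n−1}+q_n)/2}, a_{n+1} = (1/√2)e^{−q_1/2}, b_i = −½p_i (i = 1, …, n) satisfy: ȧ_i = a_i(b_{i+1} − b_i) for i = 1, …, n−1; ȧ_n = −a_n(b_{n−1} + b_n); ȧ_{n+1} = a_{n+1} b_1; ḃ_1 = 2a_1² − a_{n+1}² − 4a_{n+1}⁴; ḃ_i = 2(a_i² − a_{i−1}²) for i = 2, …, n−2 and i = n; ḃ_{n−1} = 2(a_n² + a_{n−1}² − a_{n−2}²). -/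

import Mathlib

/-!
Write `H = ½|p|² + V(q)`. Hamilton's equations read `q̇_j = p_j` and `ṗ_j = -∂V/∂q_j`.
Each `a_k` is a constant times `exp (ℓ(q)/2)` for a linear form `ℓ`, so `ȧ_k = a_k ℓ(p)/2`,
which is linear in `b = -p/2`. Each exponential in `V` is a multiple of a power of some `a_k`:
`e^{q_i-q_{i+1}} = 4a_i²`, `e^{q_{n-1}+q_n} = 4a_n²`, `e^{-q_1} = 2a_{n+1}²`,
`e^{-2q_1} = 4a_{n+1}⁴`. Hence `ḃ_j = ½ ∂V/∂q_j` is a polynomial in the `a_k`.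
-/

/-- The Kozlov–Treshchev Hamiltonian
`H(q,p) = ½Σ_{i=1}^n p_i² + Σ_{i=1}^{n−1} e^{q_i−q_{i+1}} + e^{q_{n−1}+q_n} + e^{−q_1}
 + e^{−2q_1}` on `ℝ^{2n}` (coordinates indexed `1, …, n`). -/
noncomputable def KTHam (n : ℕ) : (ℕ → ℝ) → (ℕ → ℝ) → ℝ := fun q p =>
  (1 / 2) * ∑ i ∈ Finset.Icc 1 n, (p i) ^ 2
    + ∑ i ∈ Finset.Icc 1 (n - 1), Real.exp (q i - q (i + 1))
    + Real.exp (q (n - 1) + q n) + Real.exp (-q 1) + Real.exp (-2 * q 1)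

open Finset Real

section Update

variable {𝕜 ι : Type*} [NontriviallyNormedField 𝕜] [DecidableEq ι]

theorem hasDerivAt_update_apply (x : ι → 𝕜) (i j : ι) (y : 𝕜) :
    HasDerivAt (fun y => Function.update x i y j) ((Pi.single i 1 : ι → 𝕜) j) y := by
  by_cases h : j = i
  · subst h
    simpa using hasDerivAt_id' y
  · simpa [Function.update_of_ne h, Pi.single_eq_of_ne h] using hasDerivAt_const y (x j)

theorem hasDerivAt_sum_sq_update {s : Finset ι} {i : ι} (hi : i ∈ s) (x : ι → 𝕜) :
    HasDerivAt (fun y => ∑ j ∈ s, Function.update x i y j ^ 2) (2 * x i) (x i) := by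
  have h := HasDerivAt.fun_sum fun j (_ : j ∈ s) => (hasDerivAt_update_apply x i j (x i)).pow 2
  simpa [Pi.single_apply, hi] using h

end Update

theorem Finset.sum_Icc_mul_single_sub_single {R : Type*} [Ring R] (c : ℕ → R) (m j : ℕ) :
    ∑ i ∈ Icc 1 m, c i * ((Pi.single j 1 : ℕ → R) i - (Pi.single j 1 : ℕ → R) (i + 1)) =
      (if j ∈ Icc 1 m then c j else 0) - (if j ∈ Icc 2 (m + 1) then c (j - 1) else 0) := by
  have shift : ∑ i ∈ Icc 1 m, c i * (Pi.single j 1 : ℕ → R) (i + 1) =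
      ∑ k ∈ Icc 2 (m + 1), c (k - 1) * (Pi.single j 1 : ℕ → R) k := by
    rw [← map_add_right_Icc 1 m 1, sum_map]
    simp
  simp only [mul_sub, sum_sub_distrib, shift]
  simp only [Pi.single_apply, mul_ite, mul_one, mul_zero, sum_ite_eq', mem_Icc]

theorem sq_mul_exp_half (c u : ℝ) : (c * exp (u / 2)) ^ 2 = c ^ 2 * exp u := by
  rw [mul_pow, ← exp_nat_mul]
  ring_nf

namespace KozlovTreshchev

noncomputable def potential (n : ℕ) (q : ℕ → ℝ) : ℝ :=
  ∑ i ∈ Icc 1 (n - 1), exp (q i - q (i + 1)) + exp (q (n - 1) + q n) + exp (-q 1)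
    + exp (-2 * q 1)

theorem KTHam_eq (n : ℕ) (q p : ℕ → ℝ) :
    KTHam n q p = 1 / 2 * ∑ i ∈ Icc 1 n, p i ^ 2 + potential n q := by
  simp only [KTHam, potential]
  ring

theorem hasDerivAt_KTHam_update_p {n j : ℕ} (hj : j ∈ Icc 1 n) (q p : ℕ → ℝ) :
    HasDerivAt (fun x => KTHam n q (Function.update p j x)) (p j) (p j) := by
  simp only [KTHam_eq]
  refine (((hasDerivAt_sum_sq_update hj p).const_mul (1 / 2)).add_const _).congr_deriv ?_
  ring

/-- `∂V/∂q_j`, with `Pi.single j 1 i` the derivative of `q_i` with respect to `q_j`. -/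
noncomputable def potentialPartial (n : ℕ) (q : ℕ → ℝ) (j : ℕ) : ℝ :=
  let δ : ℕ → ℝ := Pi.single j 1
  ∑ i ∈ Icc 1 (n - 1), exp (q i - q (i + 1)) * (δ i - δ (i + 1))
    + exp (q (n - 1) + q n) * (δ (n - 1) + δ n) - exp (-q 1) * δ 1
    - 2 * exp (-2 * q 1) * δ 1

theorem hasDerivAt_potential_update (n j : ℕ) (q : ℕ → ℝ) :
    HasDerivAt (fun x => potential n (Function.update q j x)) (potentialPartial n q j) (q j) := by
  have hq (i : ℕ) := hasDerivAt_update_apply q j i (q j)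
  have hchain := HasDerivAt.fun_sum fun i (_ : i ∈ Icc 1 (n - 1)) =>
    ((hq i).fun_sub (hq (i + 1))).exp
  have hend := ((hq (n - 1)).fun_add (hq n)).exp
  refine (((hchain.add hend).add (hq 1).fun_neg.exp).add
    ((hq 1).const_mul (-2)).exp).congr_deriv ?_
  simp only [potentialPartial, Function.update_eq_self]
  ring

theorem hasDerivAt_KTHam_update_q (n j : ℕ) (q p : ℕ → ℝ) :
    HasDerivAt (fun x => KTHam n (Function.update q j x) p) (potentialPartial n q j) (q j) := by
  simp only [KTHam_eq]
  exact (hasDerivAt_potential_update n j q).const_add _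

theorem potentialPartial_one {n : ℕ} (hn : 3 ≤ n) (q : ℕ → ℝ) :
    potentialPartial n q 1 = exp (q 1 - q 2) - exp (-q 1) - 2 * exp (-2 * q 1) := by
  simp only [potentialPartial, sum_Icc_mul_single_sub_single]
  simp only [mem_Icc, Pi.single_apply]
  split_ifs <;> first | omega | ring

theorem potentialPartial_of_mem {n j : ℕ} (hj : j ∈ Icc 2 (n - 2)) (q : ℕ → ℝ) :
    potentialPartial n q j = exp (q j - q (j + 1)) - exp (q (j - 1) - q j) := by
  obtain ⟨hj2, hjn⟩ := mem_Icc.1 hj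
  simp only [potentialPartial, sum_Icc_mul_single_sub_single]
  simp only [mem_Icc, Pi.single_apply, Nat.sub_add_cancel (by omega : 1 ≤ j)]
  split_ifs <;> first | omega | ring

theorem potentialPartial_sub_one {n : ℕ} (hn : 3 ≤ n) (q : ℕ → ℝ) :
    potentialPartial n q (n - 1) =
      exp (q (n - 1) - q n) - exp (q (n - 2) - q (n - 1)) + exp (q (n - 1) + q n) := by
  simp only [potentialPartial, sum_Icc_mul_single_sub_single]
  simp only [mem_Icc, Pi.single_apply, Nat.sub_add_cancel (by omega : 1 ≤ n),
    (by omega : n - 1 - 1 = n - 2), (by omega : n - 2 + 1 = n - 1)]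
  split_ifs <;> first | omega | ring

theorem potentialPartial_self {n : ℕ} (hn : 2 ≤ n) (q : ℕ → ℝ) :
    potentialPartial n q n = exp (q (n - 1) + q n) - exp (q (n - 1) - q n) := by
  simp only [potentialPartial, sum_Icc_mul_single_sub_single]
  simp only [mem_Icc, Pi.single_apply, Nat.sub_add_cancel (by omega : 1 ≤ n)]
  split_ifs <;> first | omega | ring

theorem hasDerivAt_flaschka_a {n : ℕ} (hn : 2 ≤ n) {q p a b : ℝ → ℕ → ℝ}
    (hq : ∀ (t : ℝ), ∀ j ∈ Icc 1 n, HasDerivAt (q · j) (p t j) t)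
    (ha : ∀ (t : ℝ), ∀ i ∈ Icc 1 (n - 1), a t i = 1 / 2 * exp ((q t i - q t (i + 1)) / 2))
    (han : ∀ t : ℝ, a t n = 1 / 2 * exp ((q t (n - 1) + q t n) / 2))
    (han1 : ∀ t : ℝ, a t (n + 1) = 1 / √2 * exp (-q t 1 / 2))
    (hb : ∀ (t : ℝ), ∀ i ∈ Icc 1 n, b t i = -(1 / 2) * p t i) :
    (∀ (t : ℝ), ∀ i ∈ Icc 1 (n - 1),
      HasDerivAt (a · i) (a t i * (b t (i + 1) - b t i)) t) ∧
    (∀ t : ℝ, HasDerivAt (a · n) (-(a t n * (b t (n - 1) + b t n))) t) ∧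
    (∀ t : ℝ, HasDerivAt (a · (n + 1)) (a t (n + 1) * b t 1) t) := by
  simp only [mem_Icc] at hq ha hb ⊢
  refine ⟨fun t i hi => ?_, fun t => ?_, fun t => ?_⟩
  · rw [funext (ha · i hi), ha t i hi, hb t i (by omega), hb t (i + 1) (by omega)]
    exact ((((hq t i (by omega)).fun_sub (hq t (i + 1) (by omega))).div_const 2).exp.const_mul
      _).congr_deriv (by ring)
  · rw [funext han, han t, hb t (n - 1) (by omega), hb t n (by omega)]
    exact ((((hq t (n - 1) (by omega)).fun_add (hq t n (by omega))).div_const 2).exp.const_mul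
      _).congr_deriv (by ring)
  · rw [funext han1, han1 t, hb t 1 (by omega)]
    exact (((hq t 1 (by omega)).fun_neg.div_const 2).exp.const_mul _).congr_deriv (by ring)

theorem hasDerivAt_flaschka_b {n : ℕ} (hn : 3 ≤ n) {q a b : ℝ → ℕ → ℝ}
    (hb : ∀ (t : ℝ), ∀ j ∈ Icc 1 n, HasDerivAt (b · j) (potentialPartial n (q t) j / 2) t)
    (ha : ∀ (t : ℝ), ∀ i ∈ Icc 1 (n - 1), a t i = 1 / 2 * exp ((q t i - q t (i + 1)) / 2))
    (han : ∀ t : ℝ, a t n = 1 / 2 * exp ((q t (n - 1) + q t n) / 2))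
    (han1 : ∀ t : ℝ, a t (n + 1) = 1 / √2 * exp (-q t 1 / 2)) :
    (∀ t : ℝ, HasDerivAt (b · 1)
      (2 * (a t 1) ^ 2 - (a t (n + 1)) ^ 2 - 4 * (a t (n + 1)) ^ 4) t) ∧
    (∀ (t : ℝ), ∀ i ∈ Icc 2 (n - 2),
      HasDerivAt (b · i) (2 * ((a t i) ^ 2 - (a t (i - 1)) ^ 2)) t) ∧
    (∀ t : ℝ, HasDerivAt (b · n) (2 * ((a t n) ^ 2 - (a t (n - 1)) ^ 2)) t) ∧
    (∀ t : ℝ, HasDerivAt (b · (n - 1))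
      (2 * ((a t n) ^ 2 + (a t (n - 1)) ^ 2 - (a t (n - 2)) ^ 2)) t) := by
  simp only [mem_Icc] at hb ha
  refine ⟨fun t => ?_, fun t i hi => ?_, fun t => ?_, fun t => ?_⟩
  · refine (hb t 1 (by omega)).congr_deriv ?_
    rw [potentialPartial_one hn, ha t 1 (by omega), han1 t,
      show ∀ x : ℝ, x ^ 4 = (x ^ 2) ^ 2 by intro; ring, sq_mul_exp_half, sq_mul_exp_half,
      mul_pow, ← exp_nat_mul]
    simp only [one_div, inv_pow, Nat.ofNat_nonneg, sq_sqrt, Nat.cast_ofNat]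
    ring_nf
  · obtain ⟨hi2, hin⟩ := mem_Icc.1 hi
    refine (hb t i (by omega)).congr_deriv ?_
    rw [potentialPartial_of_mem hi, ha t i (by omega), ha t (i - 1) (by omega),
      Nat.sub_add_cancel (by omega), sq_mul_exp_half, sq_mul_exp_half]
    ring
  · refine (hb t n (by omega)).congr_deriv ?_
    rw [potentialPartial_self (by omega), han t, ha t (n - 1) (by omega),
      Nat.sub_add_cancel (by omega), sq_mul_exp_half, sq_mul_exp_half]
    ring
  · refine (hb t (n - 1) (by omega)).congr_deriv ?_
    rw [potentialPartial_sub_one hn, han t, ha t (n - 1) (by omega),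
      ha t (n - 2) (by omega), Nat.sub_add_cancel (by omega), (by omega : n - 2 + 1 = n - 1),
      sq_mul_exp_half, sq_mul_exp_half, sq_mul_exp_half]
    ring

end KozlovTreshchev

open KozlovTreshchev in
/-- If `(q(t), p(t))` solves Hamilton's equations for the Kozlov–Treshchev
Hamiltonian (`n ≥ 4`), then the Flaschka-type variables
`a_i = ½e^{(q_i − q_{i+1})/2}` (`i = 1, …, n−1`), `a_n = ½e^{(q_{n−1}+q_n)/2}`,
`a_{n+1} = (1/√2)e^{−q_1/2}`, `b_i = −½p_i` satisfy the Kozlov–Treshchev system in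
Flaschka variables. -/
theorem KT_flaschka (n : ℕ) (hn : 4 ≤ n)
    (q p : ℝ → ℕ → ℝ)
    (hq : ∀ (t : ℝ), ∀ j ∈ Finset.Icc 1 n, HasDerivAt (fun s => q s j)
      (deriv (fun x => KTHam n (q t) (Function.update (p t) j x)) (p t j)) t)
    (hp : ∀ (t : ℝ), ∀ j ∈ Finset.Icc 1 n, HasDerivAt (fun s => p s j)
      (-(deriv (fun x => KTHam n (Function.update (q t) j x) (p t)) (q t j))) t)
    (a b : ℝ → ℕ → ℝ)
    (ha : ∀ (t : ℝ), ∀ i ∈ Finset.Icc 1 (n - 1),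
      a t i = (1 / 2) * Real.exp ((q t i - q t (i + 1)) / 2))
    (han : ∀ t : ℝ, a t n = (1 / 2) * Real.exp ((q t (n - 1) + q t n) / 2))
    (han1 : ∀ t : ℝ, a t (n + 1) = (1 / Real.sqrt 2) * Real.exp (-(q t 1) / 2))
    (hb : ∀ (t : ℝ), ∀ i ∈ Finset.Icc 1 n, b t i = -(1 / 2) * p t i) :
    (∀ (t : ℝ), ∀ i ∈ Finset.Icc 1 (n - 1),
      HasDerivAt (fun s => a s i) (a t i * (b t (i + 1) - b t i)) t) ∧
    (∀ t : ℝ, HasDerivAt (fun s => a s n) (-(a t n * (b t (n - 1) + b t n))) t) ∧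
    (∀ t : ℝ, HasDerivAt (fun s => a s (n + 1)) (a t (n + 1) * b t 1) t) ∧
    (∀ t : ℝ, HasDerivAt (fun s => b s 1)
      (2 * (a t 1) ^ 2 - (a t (n + 1)) ^ 2 - 4 * (a t (n + 1)) ^ 4) t) ∧
    (∀ (t : ℝ), ∀ i ∈ Finset.Icc 2 (n - 2),
      HasDerivAt (fun s => b s i) (2 * ((a t i) ^ 2 - (a t (i - 1)) ^ 2)) t) ∧
    (∀ t : ℝ, HasDerivAt (fun s => b s n) (2 * ((a t n) ^ 2 - (a t (n - 1)) ^ 2)) t) ∧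
    (∀ t : ℝ, HasDerivAt (fun s => b s (n - 1))
      (2 * ((a t n) ^ 2 + (a t (n - 1)) ^ 2 - (a t (n - 2)) ^ 2)) t) := by
  have hqp : ∀ t, ∀ j ∈ Icc 1 n, HasDerivAt (q · j) (p t j) t := fun t j hj => by
    simpa only [(hasDerivAt_KTHam_update_p hj (q t) (p t)).deriv] using hq t j hj
  have hbq : ∀ t, ∀ j ∈ Icc 1 n, HasDerivAt (b · j) (potentialPartial n (q t) j / 2) t := by
    intro t j hj
    rw [funext (hb · j hj)]
    refine ((hp t j hj).const_mul _).congr_deriv ?_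
    rw [(hasDerivAt_KTHam_update_q n j (q t) (p t)).deriv]
    ring
  obtain ⟨ha_i, ha_n, ha_n1⟩ := hasDerivAt_flaschka_a (by omega) hqp ha han han1 hb
  obtain ⟨hb_1, hb_i, hb_n, hb_n1⟩ := hasDerivAt_flaschka_b (by omega) hbq ha han han1
  exact ⟨ha_i, ha_n, ha_n1, hb_1, hb_i, hb_n, hb_n1⟩
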